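/- arXiv:1504.01445 — 2 statements merged into one kernel-verified Lean document; each statement's English description precedes it below -/
import Mathlib

section
/- There exists a ternary operation F : S¹ × S¹ × S¹ → S¹ satisfying the symmetric majority laws — F(x,y,z) = F(x,z,y) = F(y,z,x) and F(x,x,z) = F(x,z,x) = F(z,x,x) = x for all x, y, z ∈ S¹ — whose jump χ(F) is at most 2/3 (the domain (S¹)³ carrying the product topology). Hence μ(S¹, Σ') ≤ 2/3 where Σ' is the symmetric majority theory. -/
/-!
Let `F (x, y, z)` be a medoid of the three points: one of them minimising the sum of its
distances to all three. A repeated point is the only medoid, which gives the majority laws.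
The distance sum of a vertex is the perimeter minus the opposite side, so if two vertices are
both medoids up to `η`, each of the other two sides is at least their distance minus `η`;
hence three times their distance is at most the perimeter plus `2η`, and on the circle of
circumference `2` every perimeter is at most `2`. Moving the three points by at most `δ`
moves every distance sum by `O(δ)`, so a medoid of a nearby triple is `δ`-close to an
`O(δ)`-approximate medoid of the original triple, and the values of `F` near any point are
within `2/3 + O(δ)` of each other.
-/

open scoped ENNReal

/-- The jump of `f` at `b`: the infimum, over open neighborhoods `U` of `b`,
of the diameter (in `[0,∞]`) of `f '' U`. -/
noncomputable def jumpAt {B A : Type*} [TopologicalSpace B] [PseudoEMetricSpace A]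
    (f : B → A) (b : B) : ℝ≥0∞ :=
  ⨅ (U : Set B) (_ : IsOpen U) (_ : b ∈ U), EMetric.diam (f '' U)

/-- The jump of `f`: the supremum over all points of the jump of `f` there. -/
noncomputable def jump {B A : Type*} [TopologicalSpace B] [PseudoEMetricSpace A]
    (f : B → A) : ℝ≥0∞ :=
  ⨆ b, jumpAt f b

namespace AddCircle

variable {p : ℝ} [hp : Fact (0 < p)]

theorem exists_abs_le_half_period_coe_eq (u : AddCircle p) :
    ∃ r : ℝ, |r| ≤ p / 2 ∧ (r : AddCircle p) = u := by
  have hr := (equivIco p (-(p / 2)) u).2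
  exact ⟨equivIco p (-(p / 2)) u, abs_le.2 ⟨hr.1, by linarith [hr.2]⟩, coe_equivIco⟩

theorem norm_add_norm_add_norm_add_le (u v : AddCircle p) : ‖u‖ + ‖v‖ + ‖u + v‖ ≤ p := by
  obtain ⟨r, hr, rfl⟩ := exists_abs_le_half_period_coe_eq u
  obtain ⟨s, hs, rfl⟩ := exists_abs_le_half_period_coe_eq v
  have norm_coe_eq {t : ℝ} (ht : |t| ≤ p / 2) : ‖(t : AddCircle p)‖ = |t| :=
    (norm_coe_eq_abs_iff (p := p) hp.out.ne').2 (by rwa [abs_of_pos hp.out])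
  have norm_coe_le (t : ℝ) : ‖(t : AddCircle p)‖ ≤ |t| := QuotientAddGroup.norm_mk_le_norm
  have hz := norm_coe_le (r + s)
  have hsub := norm_coe_le (r + s - p)
  have hadd := norm_coe_le (r + s + p)
  simp only [coe_add, coe_sub, coe_period, add_zero, sub_zero] at hz hsub hadd
  rw [norm_coe_eq hr, norm_coe_eq hs]
  -- use `|r + s|` when `r` and `s` have opposite signs, `|r + s ∓ p|` when they do not
  obtain ⟨hr₁, hr₂⟩ := abs_le.1 hr
  obtain ⟨hs₁, hs₂⟩ := abs_le.1 hs
  cases abs_cases r <;> cases abs_cases s <;> cases abs_cases (r + s) <;>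
    cases abs_cases (r + s - p) <;> cases abs_cases (r + s + p) <;> linarith

theorem dist_add_dist_add_dist_le (x y z : AddCircle p) :
    dist x y + dist y z + dist x z ≤ p := by
  simpa [dist_eq_norm] using norm_add_norm_add_norm_add_le (x - y) (y - z)

end AddCircle

section Jump

variable {B C A : Type*} [TopologicalSpace B] [TopologicalSpace C] [PseudoEMetricSpace A]

theorem jumpAt_le_ediam_image {f : B → A} {b : B} {U : Set B} (hU : IsOpen U) (hb : b ∈ U) :
    jumpAt f b ≤ Metric.ediam (f '' U) :=
  iInf₂_le_of_le U hU (iInf_le _ hb)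

theorem jumpAt_comp_le {g : C → A} {φ : B → C} (hφ : Continuous φ) (b : B) :
    jumpAt (g ∘ φ) b ≤ jumpAt g (φ b) :=
  le_iInf₂ fun U hU => le_iInf fun hb =>
    (jumpAt_le_ediam_image (hU.preimage hφ) hb).trans <| Metric.ediam_mono <| by
      rw [Set.image_comp]
      exact Set.image_mono (Set.image_preimage_subset φ U)

theorem jump_comp_le {g : C → A} {φ : B → C} (hφ : Continuous φ) : jump (g ∘ φ) ≤ jump g :=
  iSup_le fun b => (jumpAt_comp_le hφ b).trans (le_iSup _ _)

end Jump

theorem jumpAt_le_of_forall_dist_le {B A : Type*} [PseudoMetricSpace B] [PseudoMetricSpace A]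
    {f : B → A} {b : B} {c : ℝ}
    (h : ∀ ε > 0, ∃ δ > 0, ∀ b₁ ∈ Metric.ball b δ, ∀ b₂ ∈ Metric.ball b δ,
      dist (f b₁) (f b₂) ≤ c + ε) :
    jumpAt f b ≤ ENNReal.ofReal c := by
  refine ENNReal.le_of_forall_pos_le_add fun ε hε _ => ?_
  obtain ⟨δ, hδ, hball⟩ := h ε hε
  calc jumpAt f b ≤ Metric.ediam (f '' Metric.ball b δ) :=
        jumpAt_le_ediam_image Metric.isOpen_ball (Metric.mem_ball_self hδ)
    _ ≤ ENNReal.ofReal (c + ε) := by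
        refine Metric.ediam_le ?_
        rintro _ ⟨b₁, hb₁, rfl⟩ _ ⟨b₂, hb₂, rfl⟩
        rw [edist_dist]
        exact ENNReal.ofReal_le_ofReal (hball b₁ hb₁ b₂ hb₂)
    _ ≤ ENNReal.ofReal c + ε := by
        simpa using ENNReal.ofReal_add_le (p := c) (q := ε)

section Medoid

variable {ι X : Type*} [Fintype ι] [PseudoMetricSpace X]

def sumDist (p : ι → X) (m : X) : ℝ := ∑ i, dist m (p i)

/-- The medoids are taken as a set of values, not of indices, so that they do not change when
the family is permuted; this is what makes the choice in `medoid` symmetric. -/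
def medoids (p : ι → X) : Set X :=
  {m ∈ Set.range p | ∀ w ∈ Set.range p, sumDist p m ≤ sumDist p w}

theorem medoids_nonempty [Nonempty ι] (p : ι → X) : (medoids p).Nonempty :=
  (Set.range p).exists_min_image (sumDist p) (Set.finite_range p) (Set.range_nonempty p)

noncomputable def medoid [Nonempty ι] (p : ι → X) : X := (medoids_nonempty p).some

theorem medoid_mem_medoids [Nonempty ι] (p : ι → X) : medoid p ∈ medoids p :=
  (medoids_nonempty p).some_mem

theorem sumDist_comp_perm (p : ι → X) (σ : Equiv.Perm ι) : sumDist (p ∘ σ) = sumDist p :=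
  funext fun m => Equiv.sum_comp σ fun i => dist m (p i)

theorem medoids_comp_perm (p : ι → X) (σ : Equiv.Perm ι) : medoids (p ∘ σ) = medoids p := by
  rw [medoids, medoids, sumDist_comp_perm, σ.surjective.range_comp]

theorem medoid_comp_perm [Nonempty ι] (p : ι → X) (σ : Equiv.Perm ι) :
    medoid (p ∘ σ) = medoid p := by
  unfold medoid
  congr 1
  exact medoids_comp_perm p σ

theorem sumDist_apply_le_add (p q : ι → X) (i : ι) :
    sumDist p (p i) ≤ sumDist q (q i) + 2 * Fintype.card ι * dist p q := by
  calc sumDist p (p i) ≤ ∑ k, (dist (q i) (q k) + 2 * dist p q) := by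
        refine Finset.sum_le_sum fun k _ => ?_
        linarith [dist_triangle4 (p i) (q i) (q k) (p k), dist_le_pi_dist p q i,
          dist_le_pi_dist q p k, dist_comm p q]
    _ = sumDist q (q i) + 2 * Fintype.card ι * dist p q := by
        rw [Finset.sum_add_distrib, Finset.sum_const, Finset.card_univ, nsmul_eq_mul, sumDist]
        ring

theorem exists_near_medoid_of_dist_le [Nonempty ι] {p q : ι → X} {δ : ℝ} (h : dist p q ≤ δ) :
    ∃ i, dist (medoid q) (p i) ≤ δ ∧
      ∀ j, sumDist p (p i) ≤ sumDist p (p j) + 4 * Fintype.card ι * δ := by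
  obtain ⟨⟨i, hi⟩, hmin⟩ := medoid_mem_medoids q
  refine ⟨i, ?_, fun j => ?_⟩
  · rw [← hi]
    exact (dist_le_pi_dist q p i).trans ((dist_comm q p).trans_le h)
  · have hq : sumDist q (q i) ≤ sumDist q (q j) := hi ▸ hmin (q j) ⟨j, rfl⟩
    have hpq := sumDist_apply_le_add p q i
    have hqp := sumDist_apply_le_add q p j
    rw [dist_comm q p] at hqp
    have hδ : 2 * Fintype.card ι * dist p q ≤ 2 * Fintype.card ι * δ := by gcongr
    linarith

/-- For `{i, j, k} = {0, 1, 2}`, `3 * dist (p i) (p j)` is the perimeter plus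
`sumDist p (p i) + sumDist p (p j) - 2 * sumDist p (p k)`. -/
theorem three_mul_dist_le_of_near_medoid {p : Fin 3 → X} {L η : ℝ}
    (hL : dist (p 0) (p 1) + dist (p 1) (p 2) + dist (p 0) (p 2) ≤ L) {i j : Fin 3}
    (hi : ∀ k, sumDist p (p i) ≤ sumDist p (p k) + η)
    (hj : ∀ k, sumDist p (p j) ≤ sumDist p (p k) + η) :
    3 * dist (p i) (p j) ≤ L + 2 * η := by
  have := hi 0; have := hi 1; have := hi 2; have := hj 0; have := hj 1; have := hj 2
  fin_cases i <;> fin_cases j <;>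
    simp only [sumDist, Fin.sum_univ_three, Fin.zero_eta, Fin.mk_one, Fin.reduceFinMk, Fin.isValue,
      dist_self] at * <;>
    linarith [dist_comm (p 0) (p 1), dist_comm (p 1) (p 2), dist_comm (p 0) (p 2),
      dist_nonneg (x := p 0) (y := p 1), dist_nonneg (x := p 1) (y := p 2),
      dist_nonneg (x := p 0) (y := p 2)]

theorem dist_medoid_le {L : ℝ} (hL : ∀ a b c : X, dist a b + dist b c + dist a c ≤ L)
    {p q₁ q₂ : Fin 3 → X} {δ : ℝ} (h₁ : dist p q₁ ≤ δ) (h₂ : dist p q₂ ≤ δ) :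
    dist (medoid q₁) (medoid q₂) ≤ L / 3 + 10 * δ := by
  obtain ⟨i, hi, hpi⟩ := exists_near_medoid_of_dist_le h₁
  obtain ⟨j, hj, hpj⟩ := exists_near_medoid_of_dist_le h₂
  have hij := three_mul_dist_le_of_near_medoid (hL (p 0) (p 1) (p 2)) hpi hpj
  simp only [Fintype.card_fin, Nat.cast_ofNat] at hij
  linarith [dist_triangle4 (medoid q₁) (p i) (p j) (medoid q₂), dist_comm (medoid q₂) (p j)]

theorem jump_medoid_le {L : ℝ} (hL : ∀ a b c : X, dist a b + dist b c + dist a c ≤ L) :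
    jump (medoid : (Fin 3 → X) → X) ≤ ENNReal.ofReal (L / 3) :=
  iSup_le fun p => jumpAt_le_of_forall_dist_le fun ε hε =>
    ⟨ε / 10, by positivity, fun q₁ hq₁ q₂ hq₂ => by
      have := dist_medoid_le hL (dist_comm q₁ p ▸ (Metric.mem_ball.1 hq₁).le)
        (dist_comm q₂ p ▸ (Metric.mem_ball.1 hq₂).le)
      linarith⟩

theorem jump_medoid_vec_le {L : ℝ} (hL : ∀ a b c : X, dist a b + dist b c + dist a c ≤ L) :
    jump (fun t : X × X × X => medoid ![t.1, t.2.1, t.2.2]) ≤ ENNReal.ofReal (L / 3) :=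
  (jump_comp_le (g := medoid) (by fun_prop)).trans (jump_medoid_le hL)

theorem medoid_vec_swap (x y z : X) : medoid ![x, y, z] = medoid ![x, z, y] := by
  rw [← medoid_comp_perm ![x, y, z] (Equiv.swap 1 2)]
  congr 1
  ext i
  fin_cases i <;> rfl

theorem medoid_vec_rotate (x y z : X) : medoid ![x, y, z] = medoid ![y, z, x] := by
  rw [← medoid_comp_perm ![x, y, z] (finRotate 3)]
  congr 1
  ext i
  fin_cases i <;> rfl

end Medoid

theorem medoid_vec_self_self {X : Type*} [MetricSpace X] (x z : X) :
    medoid ![x, x, z] = x := by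
  obtain ⟨⟨i, hi⟩, hmin⟩ := medoid_mem_medoids ![x, x, z]
  fin_cases i
  · exact hi.symm
  · exact hi.symm
  · have hz : medoid ![x, x, z] = z := hi.symm
    have hzx := hmin x ⟨0, rfl⟩
    rw [hz] at hzx ⊢
    simpa [sumDist, Fin.sum_univ_three, dist_comm x z] using hzx

/-- On the circle of circumference 2 there is a ternary operation satisfying the
symmetric majority laws whose jump is at most `2/3`. -/
theorem exists_symm_majority_op_on_circle_jump_le :
    ∃ F : AddCircle (2:ℝ) × AddCircle (2:ℝ) × AddCircle (2:ℝ) → AddCircle (2:ℝ),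
      (∀ x y z, F (x, y, z) = F (x, z, y)) ∧
      (∀ x y z, F (x, y, z) = F (y, z, x)) ∧
      (∀ x z, F (x, x, z) = x) ∧
      (∀ x z, F (x, z, x) = x) ∧
      (∀ x z, F (z, x, x) = x) ∧
      jump F ≤ 2/3 := by
  have : Fact ((0 : ℝ) < 2) := ⟨two_pos⟩
  refine ⟨fun t => medoid ![t.1, t.2.1, t.2.2], medoid_vec_swap, medoid_vec_rotate,
    medoid_vec_self_self, fun x z => ?_, fun x z => ?_, ?_⟩
  · exact (medoid_vec_swap x z x).trans (medoid_vec_self_self x z)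
  · exact (medoid_vec_rotate z x x).trans (medoid_vec_self_self x z)
  · calc _ ≤ ENNReal.ofReal (2 / 3) := jump_medoid_vec_le AddCircle.dist_add_dist_add_dist_le
      _ = 2 / 3 := by rw [ENNReal.ofReal_div_of_pos three_pos]; norm_num
end

section
/- Let (A,d) be a compact metric space. Suppose F : A × A × A → A and φ : A → A satisfy the equations of Σ₁: F(φᵏ(x), x, y) = x for every integer k ≥ 1 and all x, y ∈ A, and F(x,x,y) = y for all x, y ∈ A (φᵏ denoting the k-fold iterate of φ). Then max(χ(F), χ(φ)) ≥ diam(A)/2; that is, μ(A, Σ₁) ≥ diam(A)/2. -/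
/-!
Already `F` alone jumps by at least half the diameter. Given `r > χ(F)`, compactness of `A³` (via a
Lebesgue number) yields `δ > 0` such that `F` moves `δ`-close triples less than `r` apart, and
compactness of `A` yields a point `w` with `d(φᵐ(w), w) < δ` for some `m ≥ 1`. The triples
`(φᵐ(w), w, y)` and `(w, w, y)` are then `δ`-close and `F` sends them to `w` and `y`, so every
point lies within `r` of `w`, and `diam A ≤ 2r`.
-/

open scoped ENNReal

theorem jumpAt_lt_iff {B A : Type*} [TopologicalSpace B] [PseudoEMetricSpace A]
    {f : B → A} {b : B} {r : ℝ≥0∞} :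
    jumpAt f b < r ↔ ∃ U, IsOpen U ∧ b ∈ U ∧ Metric.ediam (f '' U) < r := by
  simp only [jumpAt, iInf_lt_iff, exists_prop]
  rfl

theorem exists_pos_forall_dist_lt_edist_lt_of_jump_lt {B A : Type*} [PseudoMetricSpace B]
    [CompactSpace B] [PseudoEMetricSpace A] {f : B → A} {r : ℝ≥0∞} (hr : jump f < r) :
    ∃ δ > 0, ∀ x y, dist x y < δ → edist (f x) (f y) < r := by
  have hloc (b : B) : jumpAt f b < r := (le_iSup (jumpAt f) b).trans_lt hr
  choose U hU_open hbU hU_diam using fun b => jumpAt_lt_iff.mp (hloc b)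
  obtain ⟨δ, hδ, hball⟩ := lebesgue_number_lemma_of_metric isCompact_univ hU_open
    fun b _ => Set.mem_iUnion.mpr ⟨b, hbU b⟩
  refine ⟨δ, hδ, fun x y hxy => ?_⟩
  obtain ⟨b, hb⟩ := hball x (Set.mem_univ x)
  have hx : x ∈ U b := hb (Metric.mem_ball_self hδ)
  have hy : y ∈ U b := hb (Metric.mem_ball'.mpr hxy)
  exact (Metric.edist_le_ediam_of_mem (Set.mem_image_of_mem f hx)
    (Set.mem_image_of_mem f hy)).trans_lt (hU_diam b)

theorem exists_dist_iterate_lt {A : Type*} [PseudoMetricSpace A] [CompactSpace A]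
    (φ : A → A) (x : A) {δ : ℝ} (hδ : 0 < δ) :
    ∃ w : A, ∃ m, 1 ≤ m ∧ dist (φ^[m] w) w < δ := by
  obtain ⟨a, -, ψ, hψ, hlim⟩ :=
    isCompact_univ.tendsto_subseq fun n => Set.mem_univ (φ^[n] x)
  obtain ⟨N, hN⟩ := Metric.tendsto_atTop.mp hlim (δ / 2) (half_pos hδ)
  have hlt : ψ N < ψ (N + 1) := hψ N.lt_succ_self
  refine ⟨φ^[ψ N] x, ψ (N + 1) - ψ N, by omega, ?_⟩
  rw [← Function.iterate_add_apply, Nat.sub_add_cancel hlt.le]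
  calc dist (φ^[ψ (N + 1)] x) (φ^[ψ N] x)
      ≤ dist (φ^[ψ (N + 1)] x) a + dist (φ^[ψ N] x) a := dist_triangle_right _ _ _
    _ < δ / 2 + δ / 2 := add_lt_add (hN _ N.le_succ) (hN N le_rfl)
    _ = δ := add_halves δ

/-- For a compact metric space `A`, any operations `F : A³ → A` and `φ : A → A`
satisfying the equations `Σ₁` (`F(φᵏ(x),x,y) = x` for `k ≥ 1`, and `F(x,x,y) = y`)
must have `max(χ(F), χ(φ)) ≥ diam(A)/2`. -/
theorem jump_ge_half_diam_of_sigma1 {A : Type*} [MetricSpace A] [CompactSpace A]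
    (F : A × A × A → A) (φ : A → A)
    (h1 : ∀ k : ℕ, 1 ≤ k → ∀ x y : A, F (φ^[k] x, x, y) = x)
    (h2 : ∀ x y : A, F (x, x, y) = y) :
    EMetric.diam (Set.univ : Set A) / 2 ≤ max (jump F) (jump φ) := by
  refine le_trans ?_ (le_max_left _ _)
  refine le_of_forall_gt_imp_ge_of_dense fun r hr => ENNReal.div_le_of_le_mul ?_
  obtain ⟨δ, hδ, hF⟩ := exists_pos_forall_dist_lt_edist_lt_of_jump_lt hr
  refine Metric.ediam_le fun y₁ _ y₂ _ => ?_
  obtain ⟨w, m, hm, hw⟩ := exists_dist_iterate_lt φ y₁ hδ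
  have hclose (y : A) : edist w y ≤ r := by
    have hdist : dist (φ^[m] w, w, y) (w, w, y) < δ := by
      simpa [Prod.dist_eq] using hw
    simpa only [h1 m hm, h2] using (hF _ _ hdist).le
  calc edist y₁ y₂ ≤ edist w y₁ + edist w y₂ := edist_triangle_left _ _ _
    _ ≤ r + r := add_le_add (hclose y₁) (hclose y₂)
    _ = r * 2 := (mul_two r).symm
end
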